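/- Let T* be a triad of a 3-connected matroid M with r*(M) ≥ 3, and suppose T* is not contained in any 4-element fan of M. Then for any two distinct elements a, b ∈ T*, at least one of M/a and M/b is 3-connected. -/

import Mathlib

open Set

namespace PaperDefs

variable {α : Type*}

/-- The rank of a set `X` in a matroid `M`, as an extended natural number:
the supremum of the cardinalities of independent subsets of `X`. -/
noncomputable def eRk (M : Matroid α) (X : Set α) : ℕ∞ :=
  ⨆ I ∈ {I | M.Indep I ∧ I ⊆ X}, I.encard

/-- Deletion of a set of elements from a matroid. -/
def del (M : Matroid α) (D : Set α) : Matroid α := M.restrict (M.E \ D)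

/-- Contraction of a set of elements in a matroid. -/
def con (M : Matroid α) (C : Set α) : Matroid α := (del M✶ C)✶

/-- A circuit: a minimal dependent set. -/
def Circuit (M : Matroid α) (C : Set α) : Prop :=
  M.Dep C ∧ ∀ D, D ⊂ C → M.Indep D

/-- A `k`-separation of `M`: a partition `(X, M.E \ X)` with connectivity
`λ(X) = r(X) + r(E−X) − r(M)` at most `k − 1`, and both sides of size at least `k`. -/
def kSeparation (M : Matroid α) (X : Set α) (k : ℕ) : Prop :=
  X ⊆ M.E ∧ eRk M X + eRk M (M.E \ X) ≤ eRk M M.E + ((k - 1 : ℕ) : ℕ∞) ∧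
    (k : ℕ∞) ≤ X.encard ∧ (k : ℕ∞) ≤ (M.E \ X).encard

/-- `M` is `n`-connected if it has no `k`-separations for `0 < k < n`. -/
def NConnected (M : Matroid α) (n : ℕ) : Prop :=
  ∀ k : ℕ, 0 < k → k < n → ∀ X : Set α, ¬ kSeparation M X k

/-- `X` is 3-separating in `M`: `λ_M(X) ≤ 2`. -/
def ThreeSeparating (M : Matroid α) (X : Set α) : Prop :=
  eRk M X + eRk M (M.E \ X) ≤ eRk M M.E + 2

/-- `X` is exactly 3-separating in `M`: `λ_M(X) = 2`. -/
def ExactlyThreeSeparating (M : Matroid α) (X : Set α) : Prop :=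
  eRk M X + eRk M (M.E \ X) = eRk M M.E + 2

/-- `N` is a simplification of `M`: `N` is obtained from `M` by deleting a set of
elements, `N` has no loops or parallel pairs (no circuits of size at most two), and
every element of `M` is in the closure of the ground set of `N`. -/
def IsSimplificationOf (N M : Matroid α) : Prop :=
  (∃ D ⊆ M.E, N = del M D) ∧ (∀ C, Circuit N C → 3 ≤ C.encard) ∧
    M.closure N.E = M.E

/-- `N` is a cosimplification of `M`: `N✶` is a simplification of `M✶`. -/
def IsCosimplificationOf (N M : Matroid α) : Prop :=
  IsSimplificationOf N✶ M✶

/-- `S` is a series class of `M`: a maximal nonempty set any two distinct elements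
of which form a series pair (a two-element cocircuit). -/
def IsSeriesClass (M : Matroid α) (S : Set α) : Prop :=
  S.Nonempty ∧ S ⊆ M.E ∧ (∀ a ∈ S, ∀ b ∈ S, a ≠ b → Circuit M✶ {a, b}) ∧
    (∀ a ∈ S, ∀ f, Circuit M✶ {a, f} → a ≠ f → f ∈ S)

/-- The full closure of `X` in `M`: the intersection of all sets containing `X ∩ M.E`
that are closed in both `M` and `M✶`. -/
def fullClosure (M : Matroid α) (X : Set α) : Set α :=
  ⋂₀ {F | X ∩ M.E ⊆ F ∧ M.closure F = F ∧ M✶.closure F = F}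

end PaperDefs

/-!
Suppose neither `M / a` nor `M / b` is 3-connected and write `T* = {a, b, c}`. A 1- or
2-separation of `M / a` lifts to a partition `(X, {a}, Y)` of `E(M)` with
`r(X) + r(Y) = r(M) + 2` and `a` spanned by both sides. As `E − T*` is a hyperplane, no element
of `T*` is spanned by a set avoiding `T*`; so each side meets `T*`, say `b ∈ X` and `c ∈ Y`, and
since `T*` lies in no 4-element fan, each side has at least three elements. Likewise `M / b`
gives `(U, {b}, V)` with `a ∈ U` and `c ∈ V`. Uncrossing the two separations by submodularity
shows that `X ∩ U` and `X ∩ V` or `X ∩ U` and `Y ∩ U` are singletons, so `X = {b, p, q}` or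
`U = {a, p, s}`. In the second case `{a, b, p}` is independent, which forces first `a ∈ cl(V)`
and then `a ∈ cl({p, s})`, although `{p, s}` avoids `T*`; the first case is symmetric.
-/

open Set PaperDefs
open scoped Matroid

namespace PaperDefs

variable {α : Type*} {M : Matroid α} {C X : Set α}

lemma eRk_eq (M : Matroid α) (X : Set α) : eRk M X = M.eRk X := by
  refine le_antisymm (iSup₂_le fun I hI ↦ hI.1.encard_le_eRk_of_subset hI.2) ?_
  obtain ⟨I, hI⟩ := M.exists_isBasis' X
  rw [← hI.encard_eq_eRk]
  exact le_biSup (fun I ↦ I.encard) (show I ∈ {I | M.Indep I ∧ I ⊆ X} from ⟨hI.indep, hI.subset⟩)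

lemma circuit_iff : Circuit M C ↔ M.IsCircuit C := by
  rw [Matroid.isCircuit_iff_forall_ssubset]
  exact and_congr_right fun _ ↦ ⟨fun h I hI ↦ h I hI, fun h I hI ↦ h hI⟩

lemma con_eq (M : Matroid α) (C : Set α) : con M C = M ／ C := rfl

end PaperDefs

namespace Set

variable {α : Type*} {T W A B : Set α} {a b : α}

lemma exists_eq_triple_of_encard_eq_three (hT : T.encard = 3) (ha : a ∈ T) (hb : b ∈ T)
    (hab : a ≠ b) : ∃ c, a ≠ c ∧ b ≠ c ∧ T = {a, b, c} := by
  obtain ⟨c, hc⟩ : ∃ c, T \ {a, b} = {c} := by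
    rw [← encard_eq_one]
    have h := encard_sdiff_add_encard_of_subset (pair_subset ha hb)
    rw [hT, encard_pair hab] at h
    generalize (T \ {a, b}).encard = d at h ⊢
    cases d using ENat.recTopCoe with
    | top => simp at h
    | coe n => norm_cast at h ⊢; omega
  have hcT : c ∈ T \ {a, b} := hc ▸ rfl
  refine ⟨c, fun h ↦ hcT.2 (by simp [h]), fun h ↦ hcT.2 (by simp [h]), ?_⟩
  rw [← union_sdiff_cancel (pair_subset ha hb), hc, insert_union, singleton_union]

lemma exists_subset_triple (hW : W ⊆ insert a (A ∪ B)) (hA : A.encard ≤ 1) (hB : B.encard ≤ 1)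
    (h3 : 3 ≤ W.encard) : ∃ p ∈ A, ∃ s ∈ B, W ⊆ {a, p, s} := by
  have hW' : 3 ≤ A.encard + B.encard + 1 := h3.trans ((encard_mono hW).trans
    ((encard_insert_le _ _).trans (by gcongr; exact encard_union_le A B)))
  obtain rfl | ⟨p, rfl⟩ := encard_le_one_iff_eq.1 hA
  · rw [encard_empty] at hW'
    have : (3 : ℕ∞) ≤ 0 + 1 + 1 := hW'.trans (by gcongr)
    norm_num at this
  obtain rfl | ⟨s, rfl⟩ := encard_le_one_iff_eq.1 hB
  · rw [encard_empty, encard_singleton] at hW'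
    norm_num at hW'
  exact ⟨p, rfl, s, rfl, by rwa [singleton_union] at hW⟩

end Set

namespace Matroid

variable {α : Type*} {M : Matroid α} {X Y Z K S : Set α} {e x : α}

/-- The rank as a natural number; only meaningful when `M.RankFinite`, since a set of infinite
rank gets `0`. -/
noncomputable def rk (M : Matroid α) (X : Set α) : ℕ := (M.eRk X).toNat

lemma IsCocircuit.notMem_closure_of_disjoint (hK : M.IsCocircuit K) (hSK : Disjoint S K)
    (heK : e ∈ K) : e ∉ M.closure S := by
  intro he
  obtain ⟨C, hCS, hC, heC⟩ := exists_isCircuit_of_mem_closure he (disjoint_right.1 hSK heK)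
  refine hC.inter_isCocircuit_ne_singleton hK (e := e) (subset_antisymm ?_ (by simp [heC, heK]))
  rintro z ⟨hzC, hzK⟩
  obtain rfl | hzS := hCS hzC
  · rfl
  · exact absurd hzK (disjoint_left.1 hSK hzS)

variable [M.RankFinite]

lemma cast_rk_eq (M : Matroid α) [M.RankFinite] (X : Set α) : (M.rk X : ℕ∞) = M.eRk X :=
  ENat.natCast_toNat (M.isRkFinite_set X).eRk_lt_top.ne

lemma rk_mono (h : X ⊆ Y) : M.rk X ≤ M.rk Y := by
  exact_mod_cast (M.cast_rk_eq X).trans_le ((M.eRk_mono h).trans_eq (M.cast_rk_eq Y).symm)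

lemma rk_inter_add_rk_union_le (M : Matroid α) [M.RankFinite] (X Y : Set α) :
    M.rk (X ∩ Y) + M.rk (X ∪ Y) ≤ M.rk X + M.rk Y := by
  have := M.eRk_inter_add_eRk_union_le X Y
  simp only [← cast_rk_eq] at this
  exact_mod_cast this

lemma rk_le_encard (M : Matroid α) [M.RankFinite] (X : Set α) : (M.rk X : ℕ∞) ≤ X.encard :=
  (M.cast_rk_eq X).trans_le (M.eRk_le_encard X)

lemma Indep.rk_eq_encard {I : Set α} (hI : M.Indep I) : (M.rk I : ℕ∞) = I.encard :=
  (M.cast_rk_eq I).trans hI.eRk_eq_encard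

lemma rk_closure_eq (M : Matroid α) [M.RankFinite] (X : Set α) :
    M.rk (M.closure X) = M.rk X := by
  have h := M.eRk_closure_eq X
  rw [← cast_rk_eq, ← cast_rk_eq] at h
  exact_mod_cast h

lemma rk_insert_of_mem_closure (he : e ∈ M.closure X) : M.rk (insert e X) = M.rk X := by
  have h := M.eRk_insert_closure_eq e X
  rw [insert_eq_of_mem he, eRk_closure_eq, ← cast_rk_eq, ← cast_rk_eq] at h
  exact_mod_cast h.symm

lemma rk_insert_of_notMem_closure (he : e ∈ M.E \ M.closure X) :
    M.rk (insert e X) = M.rk X + 1 := by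
  have h := eRk_insert_eq_add_one he
  rw [← cast_rk_eq, ← cast_rk_eq] at h
  exact_mod_cast h

lemma mem_closure_of_rk_insert_le (heE : e ∈ M.E) (h : M.rk (insert e X) ≤ M.rk X) :
    e ∈ M.closure X := by
  by_contra he
  have := rk_insert_of_notMem_closure ⟨heE, he⟩
  omega

lemma IsNonloop.rk_contract_add_one (hx : M.IsNonloop x) (hZ : Z ⊆ M.E \ {x}) :
    (M ／ {x}).rk Z + 1 = M.rk (insert x Z) := by
  obtain ⟨J, hJ⟩ := (M ／ {x}).exists_isBasis Z hZ
  have hJx : M.IsBasis (J ∪ {x}) (Z ∪ {x}) := hx.indep.union_isBasis_union_of_contract_isBasis hJ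
  have hxJ : x ∉ J := fun h ↦ (hZ (hJ.subset h)).2 rfl
  have h := hJx.encard_eq_eRk
  rw [union_singleton, union_singleton, encard_insert_of_notMem hxJ, hJ.encard_eq_eRk,
    ← cast_rk_eq, ← cast_rk_eq] at h
  exact_mod_cast h

lemma IsCocircuit.rk_insert_eq_add_one (hK : M.IsCocircuit K) (hSK : Disjoint S K)
    (heK : e ∈ K) : M.rk (insert e S) = M.rk S + 1 :=
  rk_insert_of_notMem_closure ⟨hK.subset_ground heK, hK.notMem_closure_of_disjoint hSK heK⟩

end Matroid

namespace PaperDefs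

variable {α : Type*} {M : Matroid α} {T X Z C : Set α} {k : ℕ} {x w d d' a b : α}

def IsInFourFan (M : Matroid α) (T : Set α) : Prop :=
  ∃ C C' : Set α, Circuit M C ∧ Circuit M✶ C' ∧
    C.encard = 3 ∧ C'.encard = 3 ∧ (C ∪ C').encard = 4 ∧ T ⊆ C ∪ C'

lemma isInFourFan_of_isCircuit (hT : M.IsCocircuit T) (hT3 : T.encard = 3) (hd : d ∈ T)
    (hd' : d' ∈ T) (hdd' : d ≠ d') (hwT : w ∉ T) (hC : M.IsCircuit {d, d', w}) :
    IsInFourFan M T := by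
  have hwd : w ≠ d := fun h ↦ hwT (h ▸ hd)
  have hwd' : w ≠ d' := fun h ↦ hwT (h ▸ hd')
  have hunion : {d, d', w} ∪ T = insert w T := by
    simp [insert_union, hd, hd']
  refine ⟨{d, d', w}, T, circuit_iff.2 hC, circuit_iff.2 hT, ?_, hT3, ?_, subset_union_right⟩
  · exact encard_eq_three.2 ⟨d, d', w, hdd', hwd.symm, hwd'.symm, rfl⟩
  · rw [hunion, encard_insert_of_notMem hwT, hT3]
    rfl

lemma four_le_encard_ground (hT : M.IsCocircuit T) (hT3 : T.encard = 3)
    (hr : 3 ≤ M✶.eRk M.E) : 4 ≤ M.E.encard := by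
  -- `r*(T*) = 2 < r*(M)`, so `T*` is a proper subset of `E`.
  obtain ⟨w, hwE, hwT⟩ : ∃ w ∈ M.E, w ∉ T := by
    by_contra! h
    have : (3 : ℕ∞) + 1 ≤ 3 := calc
      (3 : ℕ∞) + 1 ≤ M✶.eRk T + 1 := by gcongr; exact hr.trans (M✶.eRk_mono h)
      _ = 3 := hT.eRk_add_one_eq.trans hT3
    norm_num at this
  calc (4 : ℕ∞) = (insert w T).encard := by rw [encard_insert_of_notMem hwT, hT3]; rfl
    _ ≤ M.E.encard := encard_mono (insert_subset hwE hT.subset_ground)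

lemma NConnected.rankFinite (h3 : NConnected M 3) (hE : M.E.Nontrivial) : M.RankFinite := by
  obtain ⟨a, ha, b, hb, hab⟩ := hE
  rw [← Matroid.eRank_ne_top_iff]
  intro htop
  apply h3 1 one_pos (by norm_num) {a}
  refine ⟨singleton_subset_iff.2 ha, ?_, by simp, ?_⟩
  · rw [eRk_eq M M.E, Matroid.eRk_ground, htop, top_add]
    exact le_top
  · have : 1 ≤ (M.E \ {a}).encard := one_le_encard_iff_nonempty.2 ⟨b, hb, Ne.symm hab⟩
    exact_mod_cast this

variable [M.RankFinite]

lemma NConnected.rk_add_le_rk_add_rk_compl (h3 : NConnected M 3) (hk0 : 0 < k) (hk3 : k < 3)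
    (hX : X ⊆ M.E) (hkX : k ≤ X.encard) (hkX' : k ≤ (M.E \ X).encard) :
    M.rk M.E + k ≤ M.rk X + M.rk (M.E \ X) := by
  by_contra hlt
  refine h3 k hk0 hk3 X ⟨hX, ?_, hkX, hkX'⟩
  simp only [eRk_eq, ← Matroid.cast_rk_eq]
  exact_mod_cast (by omega : M.rk X + M.rk (M.E \ X) ≤ M.rk M.E + (k - 1))

lemma NConnected.rk_add_two_le (h3 : NConnected M 3) (hZE : Z ⊆ M.E) (hZ : 2 ≤ Z.encard)
    (hab : a ≠ b) (ha : a ∈ M.E \ Z) (hb : b ∈ M.E \ Z) :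
    M.rk M.E + 2 ≤ M.rk Z + M.rk (M.E \ Z) := by
  have hc : 2 ≤ (M.E \ Z).encard :=
    (encard_pair hab).symm.le.trans (encard_mono (pair_subset ha hb))
  exact h3.rk_add_le_rk_add_rk_compl two_pos (by norm_num) hZE (by exact_mod_cast hZ)
    (by exact_mod_cast hc)

lemma NConnected.rk_add_three_le (h3 : NConnected M 3) (hT : M.IsCocircuit T) (hd : d ∈ T)
    (hZT : Disjoint Z T) (hZE : Z ⊆ M.E) (hZ : 2 ≤ Z.encard) (hab : a ≠ b) (ha : a ∈ M.E \ Z)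
    (hb : b ∈ M.E \ Z) : M.rk M.E + 3 ≤ M.rk (insert d Z) + M.rk (M.E \ Z) := by
  have := h3.rk_add_two_le hZE hZ hab ha hb
  rw [hT.rk_insert_eq_add_one hZT hd]
  omega

lemma NConnected.three_le_encard_of_isCircuit (h3 : NConnected M 3) (hE : 4 ≤ M.E.encard)
    (hC : M.IsCircuit C) : 3 ≤ C.encard := by
  -- A circuit with `k ≤ 2` elements has rank `k - 1`, so it would give a `k`-separation.
  by_contra! hlt
  obtain ⟨k, hk⟩ : ∃ k : ℕ, C.encard = k := ⟨_, (ENat.natCast_toNat hlt.ne_top).symm⟩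
  have hrk : M.rk C + 1 = k := by
    have := hC.eRk_add_one_eq
    rw [hk, ← Matroid.cast_rk_eq] at this
    exact_mod_cast this
  have hk3 : k < 3 := by
    rw [hk] at hlt
    exact_mod_cast hlt
  have hcompl : (k : ℕ∞) ≤ (M.E \ C).encard := by
    have h : 4 ≤ (M.E \ C).encard + C.encard :=
      hE.trans (encard_sdiff_add_encard_of_subset hC.subset_ground).ge
    rw [hk] at h
    generalize (M.E \ C).encard = d at h ⊢
    cases d using ENat.recTopCoe with
    | top => exact le_top
    | coe n => norm_cast at h ⊢; omega
  have := h3.rk_add_le_rk_add_rk_compl (by omega) hk3 hC.subset_ground hk.ge hcompl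
  have := Matroid.rk_mono (M := M) (sdiff_subset : M.E \ C ⊆ M.E)
  omega

lemma NConnected.isNonloop (h3 : NConnected M 3) (hE : 4 ≤ M.E.encard) (he : x ∈ M.E) :
    M.IsNonloop x := by
  rw [← Matroid.not_isLoop_iff, ← Matroid.singleton_isCircuit]
  intro h
  simpa using h3.three_le_encard_of_isCircuit hE h

lemma NConnected.indep_of_not_isInFourFan (h3 : NConnected M 3) (hE : 4 ≤ M.E.encard)
    (hfan : ¬ IsInFourFan M T) (hT : M.IsCocircuit T) (hT3 : T.encard = 3) (hd : d ∈ T)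
    (hd' : d' ∈ T) (hdd' : d ≠ d') (hw : w ∈ M.E) (hwT : w ∉ T) : M.Indep {d, d', w} := by
  by_contra hind
  have hdep : M.Dep {d, d', w} :=
    ⟨hind, by simp [insert_subset_iff, hT.subset_ground hd, hT.subset_ground hd', hw]⟩
  obtain ⟨C, hCsub, hC⟩ := hdep.exists_isCircuit_subset
  have hwd : w ≠ d := fun h ↦ hwT (h ▸ hd)
  have hwd' : w ≠ d' := fun h ↦ hwT (h ▸ hd')
  have hCeq : C = {d, d', w} := (toFinite _).eq_of_subset_of_encard_le' hCsub <|
    (encard_eq_three.2 ⟨d, d', w, hdd', hwd.symm, hwd'.symm, rfl⟩).trans_le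
      (h3.three_le_encard_of_isCircuit hE hC)
  exact hfan (isInFourFan_of_isCircuit hT hT3 hd hd' hdd' hwT (hCeq ▸ hC))

end PaperDefs

namespace Matroid

variable {α : Type*} {M : Matroid α} {X Y U V : Set α} {x a b : α}

/-- `x` is in the guts of the exact 3-separation `(X, Y ∪ {x})` of `M`, and is also spanned by
`Y`. -/
structure IsGutsSep (M : Matroid α) (x : α) (X Y : Set α) : Prop where
  union_eq : X ∪ Y = M.E \ {x}
  disjoint : Disjoint X Y
  mem_closure_left : x ∈ M.closure X
  mem_closure_right : x ∈ M.closure Y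
  rk_add_rk : M.rk X + M.rk Y = M.rk M.E + 2

namespace IsGutsSep

lemma symm (G : M.IsGutsSep x X Y) : M.IsGutsSep x Y X where
  union_eq := union_comm X Y ▸ G.union_eq
  disjoint := G.disjoint.symm
  mem_closure_left := G.mem_closure_right
  mem_closure_right := G.mem_closure_left
  rk_add_rk := add_comm (M.rk Y) _ ▸ G.rk_add_rk

lemma subset_left (G : M.IsGutsSep x X Y) : X ⊆ M.E \ {x} :=
  G.union_eq ▸ subset_union_left

lemma subset_right (G : M.IsGutsSep x X Y) : Y ⊆ M.E \ {x} :=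
  G.symm.subset_left

variable [M.RankFinite]

lemma rk_insert_left (G : M.IsGutsSep x X Y) : M.rk (insert x X) = M.rk X :=
  rk_insert_of_mem_closure G.mem_closure_left

lemma rk_uncross (Ga : M.IsGutsSep a X Y) (Gb : M.IsGutsSep b U V) :
    M.rk (insert a X ∩ insert b U) + M.rk (insert a X ∪ insert b U) +
      (M.rk (insert a Y ∩ insert b V) + M.rk (insert a Y ∪ insert b V)) ≤ 2 * M.rk M.E + 4 := by
  have h1 := M.rk_inter_add_rk_union_le (insert a X) (insert b U)
  have h2 := M.rk_inter_add_rk_union_le (insert a Y) (insert b V)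
  rw [Ga.rk_insert_left, Gb.rk_insert_left] at h1
  rw [Ga.symm.rk_insert_left, Gb.symm.rk_insert_left] at h2
  have := Ga.rk_add_rk
  have := Gb.rk_add_rk
  omega

end IsGutsSep

end Matroid

namespace PaperDefs

variable {α : Type*} {M : Matroid α} {T X Y A B : Set α} {k : ℕ} {x u v : α}

variable [M.RankFinite]

lemma rk_insert_add_rk_insert_le_of_kSeparation (hx : M.IsNonloop x) (hk : 0 < k)
    (h : kSeparation (con M {x}) X k) :
    M.rk (insert x X) + M.rk (insert x ((M.E \ {x}) \ X)) ≤ M.rk M.E + k := by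
  obtain ⟨hXE, hrk, -, -⟩ := h
  rw [con_eq, Matroid.contract_ground] at hXE hrk
  have hrX := hx.rk_contract_add_one hXE
  have hrY := hx.rk_contract_add_one (sdiff_subset : (M.E \ {x}) \ X ⊆ _)
  have hrE := hx.rk_contract_add_one subset_rfl
  rw [insert_sdiff_singleton, insert_eq_of_mem hx.mem_ground] at hrE
  simp only [eRk_eq, ← Matroid.cast_rk_eq] at hrk
  have : (M ／ {x}).rk X + (M ／ {x}).rk ((M.E \ {x}) \ X) ≤
      (M ／ {x}).rk (M.E \ {x}) + (k - 1) := by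
    exact_mod_cast hrk
  omega

lemma NConnected.rk_add_two_le_rk_insert_add_rk (h3 : NConnected M 3) (hx : x ∈ M.E)
    (hAB : A ∪ B = M.E \ {x}) (hdAB : Disjoint A B) (hA : A.Nonempty) (hB : 2 ≤ B.encard) :
    M.rk M.E + 2 ≤ M.rk (insert x A) + M.rk B := by
  obtain ⟨a, ha⟩ := hA
  have hBE : B ⊆ M.E := fun z hz ↦ (hAB.symm ▸ (mem_union_right A hz) : z ∈ M.E \ {x}).1
  have hxA : x ∉ A := fun h ↦ (hAB.symm ▸ (mem_union_left B h) : x ∈ M.E \ {x}).2 rfl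
  have hcompl : M.E \ B = insert x A := by
    ext z
    have hz : z ∈ A ∪ B ↔ z ∈ M.E \ {x} := by rw [hAB]
    have : z ∈ A → z ∉ B := fun h ↦ disjoint_left.1 hdAB h
    simp only [mem_union, mem_sdiff, mem_singleton_iff, mem_insert_iff] at hz ⊢
    grind
  have h2 : 2 ≤ (insert x A).encard := by
    rw [encard_insert_of_notMem hxA, ← one_add_one_eq_two]
    gcongr
    exact one_le_encard_iff_nonempty.2 ⟨a, ha⟩
  have := h3.rk_add_le_rk_add_rk_compl two_pos (by norm_num) hBE hB
    (by rw [hcompl]; exact_mod_cast h2)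
  rw [hcompl] at this
  omega

lemma NConnected.isGutsSep_of_rk_insert_add_rk_insert_le (h3 : NConnected M 3)
    (hE : 4 ≤ M.E.encard) (hx : x ∈ M.E) (hXY : X ∪ Y = M.E \ {x}) (hdisj : Disjoint X Y)
    (hk0 : 0 < k) (hk3 : k < 3) (hkX : k ≤ X.encard) (hkY : k ≤ Y.encard)
    (hrk : M.rk (insert x X) + M.rk (insert x Y) ≤ M.rk M.E + k) :
    M.IsGutsSep x X Y ∧ 2 ≤ X.encard ∧ 2 ≤ Y.encard := by
  have hXne : X.Nonempty := one_le_encard_iff_nonempty.1 (le_trans (by exact_mod_cast hk0) hkX)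
  have hYne : Y.Nonempty := one_le_encard_iff_nonempty.1 (le_trans (by exact_mod_cast hk0) hkY)
  have hmX := Matroid.rk_mono (M := M) (subset_insert x X)
  have hmY := Matroid.rk_mono (M := M) (subset_insert x Y)
  have hsize : 2 ≤ X.encard ∨ 2 ≤ Y.encard := by
    by_contra! h
    have hE3 : M.E.encard ≤ 1 + 1 + 1 := calc
      M.E.encard ≤ (insert x (X ∪ Y)).encard := by
        rw [hXY, insert_sdiff_singleton, insert_eq_of_mem hx]
      _ ≤ X.encard + Y.encard + 1 :=
        (encard_insert_le _ _).trans (by gcongr; exact encard_union_le _ _)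
      _ ≤ 1 + 1 + 1 := by
        gcongr
        exacts [ENat.lt_two_iff.1 h.1, ENat.lt_two_iff.1 h.2]
    exact absurd (hE.trans hE3) (by norm_num)
  have hk2 : k = 2 := by
    rcases hsize with h | h
    · have := h3.rk_add_two_le_rk_insert_add_rk hx (union_comm X Y ▸ hXY) hdisj.symm hYne h
      omega
    · have := h3.rk_add_two_le_rk_insert_add_rk hx hXY hdisj hXne h
      omega
  subst hk2
  have hX2 : 2 ≤ X.encard := by exact_mod_cast hkX
  have hY2 : 2 ≤ Y.encard := by exact_mod_cast hkY
  have h1 := h3.rk_add_two_le_rk_insert_add_rk hx hXY hdisj hXne hY2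
  have h2 := h3.rk_add_two_le_rk_insert_add_rk hx (union_comm X Y ▸ hXY) hdisj.symm hYne hX2
  exact ⟨⟨hXY, hdisj, Matroid.mem_closure_of_rk_insert_le hx (by omega),
    Matroid.mem_closure_of_rk_insert_le hx (by omega), by omega⟩, hX2, hY2⟩

lemma NConnected.exists_isGutsSep (h3 : NConnected M 3) (hE : 4 ≤ M.E.encard) (hx : x ∈ M.E)
    (hcon : ¬ NConnected (con M {x}) 3) :
    ∃ X Y, M.IsGutsSep x X Y ∧ 2 ≤ X.encard ∧ 2 ≤ Y.encard := by
  simp only [NConnected, not_forall, not_not] at hcon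
  obtain ⟨k, hk0, hk3, X, hsep⟩ := hcon
  have hrk := rk_insert_add_rk_insert_le_of_kSeparation (h3.isNonloop hE hx) hk0 hsep
  obtain ⟨hXE, -, hkX, hkY⟩ := hsep
  rw [con_eq, Matroid.contract_ground] at hXE hkY
  exact ⟨X, _, h3.isGutsSep_of_rk_insert_add_rk_insert_le hE hx (union_sdiff_cancel hXE)
    disjoint_sdiff_right hk0 hk3 hkX hkY hrk⟩

lemma NConnected.three_le_encard_of_mem_closure (h3 : NConnected M 3) (hE : 4 ≤ M.E.encard)
    (hfan : ¬ IsInFourFan M T) (hT : M.IsCocircuit T) (hT3 : T.encard = 3) (hx : x ∈ T)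
    (hu : u ∈ T) (hxu : x ≠ u) (hXE : X ⊆ M.E) (hxX : x ∉ X) (hXT : X ∩ T ⊆ {u})
    (hX : 2 ≤ X.encard) (hcl : x ∈ M.closure X) : 3 ≤ X.encard := by
  by_contra! hlt
  have huX : u ∈ X := by
    by_contra huX
    refine hT.notMem_closure_of_disjoint (disjoint_left.2 fun z hzX hzT ↦ ?_) hx hcl
    exact huX (hXT ⟨hzX, hzT⟩ ▸ hzX)
  obtain ⟨t, ht⟩ : ∃ t, X \ {u} = {t} := by
    rw [← encard_eq_one]
    have h := encard_sdiff_singleton_add_one huX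
    generalize (X \ {u}).encard = d at h
    rw [← h] at hX hlt
    cases d using ENat.recTopCoe with
    | top => simp at hlt
    | coe n => norm_cast at hX hlt ⊢; omega
  have htX : t ∈ X := (ht.symm ▸ mem_singleton t : t ∈ X \ {u}).1
  have htT : t ∉ T := fun h ↦ (ht.symm ▸ mem_singleton t : t ∈ X \ {u}).2 (hXT ⟨htX, h⟩)
  have hXeq : X = {u, t} := by
    rw [← ht, insert_sdiff_singleton, insert_eq_of_mem huX]
  have hind := h3.indep_of_not_isInFourFan hE hfan hT hT3 hx hu hxu (hXE htX) htT
  refine hind.notMem_closure_sdiff_of_mem (mem_insert x _) ?_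
  rwa [insert_sdiff_self_of_notMem (hXeq ▸ hxX), ← hXeq]

lemma NConnected.exists_isGutsSep_of_triad (h3 : NConnected M 3) (hE : 4 ≤ M.E.encard)
    (hT : M.IsCocircuit {x, u, v}) (hfan : ¬ IsInFourFan M {x, u, v}) (hxu : x ≠ u)
    (hxv : x ≠ v) (huv : u ≠ v) (hcon : ¬ NConnected (con M {x}) 3) :
    ∃ X Y, M.IsGutsSep x X Y ∧ 3 ≤ X.encard ∧ 3 ≤ Y.encard ∧ u ∈ X ∧ v ∈ Y := by
  have hT3 : ({x, u, v} : Set α).encard = 3 := encard_eq_three.2 ⟨x, u, v, hxu, hxv, huv, rfl⟩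
  obtain ⟨X, Y, G, hX2, hY2⟩ := h3.exists_isGutsSep hE (hT.subset_ground (mem_insert _ _)) hcon
  have meets : ∀ {Z : Set α}, Z ⊆ M.E \ {x} → x ∈ M.closure Z → u ∈ Z ∨ v ∈ Z := by
    intro Z hZ hcl
    by_contra! h
    refine hT.notMem_closure_of_disjoint (disjoint_right.2 ?_) (mem_insert _ _) hcl
    rintro z (rfl | rfl | rfl) hz
    exacts [(hZ hz).2 rfl, h.1 hz, h.2 hz]
  wlog huX : u ∈ X generalizing X Y
  · have hvX := (meets G.subset_left G.mem_closure_left).resolve_left huX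
    exact this Y X G.symm hY2 hX2 <|
      (meets G.subset_right G.mem_closure_right).resolve_right (disjoint_left.1 G.disjoint hvX)
  have hvY : v ∈ Y :=
    (meets G.subset_right G.mem_closure_right).resolve_left (disjoint_left.1 G.disjoint huX)
  have hXT : X ∩ {x, u, v} ⊆ {u} := by
    rintro z ⟨hzX, rfl | rfl | rfl⟩
    exacts [absurd rfl (G.subset_left hzX).2, rfl, absurd hvY (disjoint_left.1 G.disjoint hzX)]
  have hYT : Y ∩ {x, u, v} ⊆ {v} := by
    rintro z ⟨hzY, rfl | rfl | rfl⟩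
    exacts [absurd rfl (G.subset_right hzY).2, absurd huX (disjoint_right.1 G.disjoint hzY), rfl]
  refine ⟨X, Y, G, ?_, ?_, huX, hvY⟩
  · exact h3.three_le_encard_of_mem_closure hE hfan hT hT3 (mem_insert _ _) (by simp) hxu
      (fun z hz ↦ (G.subset_left hz).1) (fun h ↦ (G.subset_left h).2 rfl) hXT hX2
      G.mem_closure_left
  · exact h3.three_le_encard_of_mem_closure hE hfan hT hT3 (mem_insert _ _) (by simp) hxv
      (fun z hz ↦ (G.subset_right hz).1) (fun h ↦ (G.subset_right h).2 rfl) hYT hY2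
      G.mem_closure_right

end PaperDefs

namespace Matroid

variable {α : Type*} {M : Matroid α} {X Y U V : Set α} {a b c p s : α}

/-- The configuration produced by a triad `{a, b, c}` when neither `M / a` nor `M / b` is
3-connected. -/
structure TriadGutsSeps (M : Matroid α) (a b c : α) (X Y U V : Set α) : Prop where
  isCocircuit : M.IsCocircuit {a, b, c}
  left : M.IsGutsSep a X Y
  right : M.IsGutsSep b U V
  mem_left : b ∈ X
  mem_right : a ∈ U
  mem_inter : c ∈ Y ∩ V

namespace TriadGutsSeps

lemma swap (S : M.TriadGutsSeps a b c X Y U V) : M.TriadGutsSeps b a c U V X Y :=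
  ⟨insert_comm a b {c} ▸ S.isCocircuit, S.right, S.left, S.mem_right, S.mem_left,
    inter_comm Y V ▸ S.mem_inter⟩

/-- Everything `grind` needs to decide membership of `z` in the sets of the configuration. -/
lemma mem_spec (S : M.TriadGutsSeps a b c X Y U V) (z : α) :
    (z ∈ X ∨ z ∈ Y ↔ z ∈ M.E ∧ z ≠ a) ∧ (z ∈ U ∨ z ∈ V ↔ z ∈ M.E ∧ z ≠ b) ∧
      ¬ (z ∈ X ∧ z ∈ Y) ∧ ¬ (z ∈ U ∧ z ∈ V) ∧ b ∈ X ∧ a ∈ U ∧ c ∈ Y ∧ c ∈ V := by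
  refine ⟨?_, ?_, fun h ↦ disjoint_left.1 S.left.disjoint h.1 h.2,
    fun h ↦ disjoint_left.1 S.right.disjoint h.1 h.2, S.mem_left, S.mem_right, S.mem_inter⟩
  · rw [← mem_union, S.left.union_eq]; rfl
  · rw [← mem_union, S.right.union_eq]; rfl

variable [M.RankFinite]

lemma not_two_le_encard_inter_inter (S : M.TriadGutsSeps a b c X Y U V) (h3 : NConnected M 3) :
    ¬ (2 ≤ (X ∩ U).encard ∧ 2 ≤ (Y ∩ V).encard) := by
  rintro ⟨hXU, hYV⟩
  have haE : a ∈ M.E := S.isCocircuit.subset_ground (by simp)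
  have hbE : b ∈ M.E := S.isCocircuit.subset_ground (by simp)
  have hab : a ≠ b := by grind [S.mem_spec a]
  have := S.left.rk_uncross S.right
  have hXU' := M.rk_mono (X := insert a (X ∩ U)) (Y := insert a X ∩ insert b U)
    fun z _ ↦ by grind [S.mem_spec z]
  have hYVc := M.rk_mono (X := M.E \ (Y ∩ V)) (Y := insert a X ∪ insert b U)
    fun z _ ↦ by grind [S.mem_spec z]
  have hYV' := M.rk_mono (X := Y ∩ V) (Y := insert a Y ∩ insert b V)
    fun z _ ↦ by grind [S.mem_spec z]
  have hXUc := M.rk_mono (X := M.E \ (X ∩ U)) (Y := insert a Y ∪ insert b V)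
    fun z _ ↦ by grind [S.mem_spec z]
  have := h3.rk_add_three_le S.isCocircuit (d := a) (by simp)
    (disjoint_left.2 fun z _ _ ↦ by grind [S.mem_spec z]) (fun z _ ↦ by grind [S.mem_spec z])
    hXU hab (by grind [S.mem_spec a]) (by grind [S.mem_spec b])
  have := h3.rk_add_two_le (fun z _ ↦ by grind [S.mem_spec z]) hYV hab
    (by grind [S.mem_spec a]) (by grind [S.mem_spec b])
  omega

lemma not_two_le_encard_inter_inter' (S : M.TriadGutsSeps a b c X Y U V) (h3 : NConnected M 3) :
    ¬ (2 ≤ (X ∩ V).encard ∧ 2 ≤ (Y ∩ U).encard) := by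
  rintro ⟨hXV, hYU⟩
  have hab : a ≠ b := by grind [S.mem_spec a]
  have := S.left.rk_uncross S.right.symm
  have hXV' := M.rk_mono (X := insert b (X ∩ V)) (Y := insert a X ∩ insert b V)
    fun z _ ↦ by grind [S.mem_spec z]
  have hYUc := M.rk_mono (X := M.E \ (Y ∩ U)) (Y := insert a X ∪ insert b V)
    fun z _ ↦ by grind [S.mem_spec z]
  have hYU' := M.rk_mono (X := insert a (Y ∩ U)) (Y := insert a Y ∩ insert b U)
    fun z _ ↦ by grind [S.mem_spec z]
  have hXVc := M.rk_mono (X := M.E \ (X ∩ V)) (Y := insert a Y ∪ insert b U)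
    fun z _ ↦ by grind [S.mem_spec z]
  have := h3.rk_add_three_le S.isCocircuit (d := b) (by simp)
    (disjoint_left.2 fun z _ _ ↦ by grind [S.mem_spec z]) (fun z _ ↦ by grind [S.mem_spec z])
    hXV hab (by grind [S.mem_spec a]) (by grind [S.mem_spec b])
  have := h3.rk_add_three_le S.isCocircuit (d := a) (by simp)
    (disjoint_left.2 fun z _ _ ↦ by grind [S.mem_spec z]) (fun z _ ↦ by grind [S.mem_spec z])
    hYU hab (by grind [S.mem_spec a]) (by grind [S.mem_spec b])
  omega

lemma two_le_encard_inter_inter (S : M.TriadGutsSeps a b c X Y U V) (h3 : NConnected M 3)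
    (hY : 3 ≤ Y.encard) (hV : 3 ≤ V.encard) : 2 ≤ (Y ∩ V).encard := by
  by_contra! h
  have hYV : Y ∩ V ⊆ {c} := fun z hz ↦ encard_le_one_iff.1 (ENat.lt_two_iff.1 h) z c hz S.mem_inter
  have two_le : ∀ {W W' : Set α}, 3 ≤ W.encard → W ⊆ insert c W' → 2 ≤ W'.encard := by
    intro W W' hW hWW'
    exact (ENat.add_le_add_iff_right ENat.one_ne_top).1
      (hW.trans ((encard_mono hWW').trans (encard_insert_le _ _)))
  exact S.not_two_le_encard_inter_inter' h3 ⟨two_le hV fun z _ ↦ by grind [S.mem_spec z, @hYV z],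
    two_le hY fun z _ ↦ by grind [S.mem_spec z, @hYV z]⟩

lemma mem_closure_right_of_subset_triple (S : M.TriadGutsSeps a b c X Y U V)
    (h3 : NConnected M 3) (hE : 4 ≤ M.E.encard) (hfan : ¬ IsInFourFan M {a, b, c})
    (hYV : 2 ≤ (Y ∩ V).encard) (hU : U ⊆ {a, p, s}) (hp : p ∈ X ∩ U) (hs : s ∈ Y ∩ U) :
    a ∈ M.closure V := by
  have haE : a ∈ M.E := S.isCocircuit.subset_ground (by simp)
  have hab : a ≠ b := by grind [S.mem_spec a]
  have hT3 : ({a, b, c} : Set α).encard = 3 :=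
    encard_eq_three.2 ⟨a, b, c, hab, by grind [S.mem_spec c], by grind [S.mem_spec c], rfl⟩
  -- `{a, b, p}` is not a triangle, so it is independent.
  have habp : M.rk {a, b, p} = 3 := by
    have h := (h3.indep_of_not_isInFourFan (w := p) hE hfan S.isCocircuit hT3 (by simp) (by simp)
      hab (by grind [S.mem_spec p]) (by grind [S.mem_spec p])).rk_eq_encard
    rw [encard_eq_three.2 ⟨a, b, p, hab, by grind [S.mem_spec p], by grind [S.mem_spec p], rfl⟩]
      at h
    exact_mod_cast h
  have hU3 : M.rk U ≤ 3 := by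
    have h := (M.rk_le_encard U).trans ((encard_mono hU).trans
      (encard_eq_three.2 ⟨a, p, s, by grind [S.mem_spec p], by grind [S.mem_spec s],
        by grind [S.mem_spec p], rfl⟩).le)
    exact_mod_cast h
  have hcompl : M.rk (M.E \ (Y ∩ V)) ≤ M.rk X := by
    have h := M.rk_inter_add_rk_union_le (insert a X) (insert b U)
    rw [S.left.rk_insert_left, S.right.rk_insert_left] at h
    have := M.rk_mono (X := {a, b, p}) (Y := insert a X ∩ insert b U)
      fun z _ ↦ by grind [S.mem_spec z]
    have := M.rk_mono (X := M.E \ (Y ∩ V)) (Y := insert a X ∪ insert b U)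
      fun z _ ↦ by grind [S.mem_spec z]
    omega
  refine M.closure_subset_closure (inter_subset_right (s := Y))
    (Matroid.mem_closure_of_rk_insert_le haE ?_)
  have := h3.rk_add_two_le (fun z _ ↦ by grind [S.mem_spec z]) hYV hab
    (by grind [S.mem_spec a]) (by grind [S.mem_spec b])
  have := M.rk_mono (insert_subset_insert inter_subset_left : insert a (Y ∩ V) ⊆ insert a Y)
  have := S.left.symm.rk_insert_left
  have := S.left.rk_add_rk
  omega

lemma false_of_subset_triple (S : M.TriadGutsSeps a b c X Y U V) (h3 : NConnected M 3)
    (hE : 4 ≤ M.E.encard) (hfan : ¬ IsInFourFan M {a, b, c}) (hYV : 2 ≤ (Y ∩ V).encard)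
    (hU : U ⊆ {a, p, s}) (hp : p ∈ X ∩ U) (hs : s ∈ Y ∩ U) : False := by
  have hab : a ≠ b := by grind [S.mem_spec a]
  have hpE : p ∈ M.E := by grind [S.mem_spec p]
  have hsE : s ∈ M.E := by grind [S.mem_spec s]
  have haV := S.mem_closure_right_of_subset_triple h3 hE hfan hYV hU hp hs
  have hVcl : M.rk (M.E \ {p, s}) ≤ M.rk V := by
    have hsub : M.E \ {p, s} ⊆ insert a (insert b V) := fun z _ ↦ by grind [S.mem_spec z, @hU z]
    refine (M.rk_mono (hsub.trans ?_)).trans_eq (M.rk_closure_eq V)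
    exact insert_subset haV (insert_subset S.right.mem_closure_right
      (M.subset_closure V fun z hz ↦ (S.right.subset_right hz).1))
  have hUeq : U = insert a {p, s} := hU.antisymm (insert_subset S.mem_right (pair_subset hp.2 hs.2))
  have hps : M.rk U = M.rk {p, s} + 1 := by
    rw [hUeq]
    exact S.isCocircuit.rk_insert_eq_add_one (disjoint_left.2 fun z _ _ ↦ by
      grind [S.mem_spec z, S.mem_spec p, S.mem_spec s]) (by simp)
  have := h3.rk_add_two_le (pair_subset hpE hsE) (encard_pair (by grind [S.mem_spec p])).ge hab
    (by grind [S.mem_spec a]) (by grind [S.mem_spec b])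
  have := S.right.rk_add_rk
  omega

lemma false_of_three_le_encard (S : M.TriadGutsSeps a b c X Y U V) (h3 : NConnected M 3)
    (hE : 4 ≤ M.E.encard) (hfan : ¬ IsInFourFan M {a, b, c}) (hX : 3 ≤ X.encard)
    (hY : 3 ≤ Y.encard) (hU : 3 ≤ U.encard) (hV : 3 ≤ V.encard) : False := by
  have hYV := S.two_le_encard_inter_inter h3 hY hV
  have hXU : (X ∩ U).encard ≤ 1 :=
    ENat.lt_two_iff.1 (not_le.1 fun h ↦ S.not_two_le_encard_inter_inter h3 ⟨h, hYV⟩)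
  by_cases hXV : 2 ≤ (X ∩ V).encard
  · have hYU : (Y ∩ U).encard ≤ 1 :=
      ENat.lt_two_iff.1 (not_le.1 fun h ↦ S.not_two_le_encard_inter_inter' h3 ⟨hXV, h⟩)
    obtain ⟨p, hp, s, hs, hUps⟩ := exists_subset_triple (a := a)
      (fun z _ ↦ by grind [S.mem_spec z]) hXU hYU hU
    exact S.false_of_subset_triple h3 hE hfan hYV hUps hp hs
  · obtain ⟨p, hp, q, hq, hXpq⟩ := exists_subset_triple (a := b) (A := X ∩ U) (B := X ∩ V)
      (fun z _ ↦ by grind [S.mem_spec z]) hXU (ENat.lt_two_iff.1 (not_le.1 hXV)) hX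
    exact S.swap.false_of_subset_triple h3 hE (insert_comm a b {c} ▸ hfan) (inter_comm Y V ▸ hYV)
      hXpq (inter_comm X U ▸ hp) (inter_comm X V ▸ hq)

end TriadGutsSeps

end Matroid

/-- If `T*` is a triad of a 3-connected matroid `M` with
`r*(M) ≥ 3`, and `T*` is contained in no 4-element fan of `M`, then for any two
distinct `a, b ∈ T*`, one of `M / a` and `M / b` is 3-connected. -/
theorem statement_16 {α : Type*} (M : Matroid α) (Tstar : Set α) (a b : α)
    (h3 : NConnected M 3) (hcork : 3 ≤ eRk M✶ M.E)
    (hT : Circuit M✶ Tstar) (hTcard : Tstar.encard = 3)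
    (hnofan : ¬ ∃ C C' : Set α, Circuit M C ∧ Circuit M✶ C' ∧
      C.encard = 3 ∧ C'.encard = 3 ∧ (C ∪ C').encard = 4 ∧ Tstar ⊆ C ∪ C')
    (ha : a ∈ Tstar) (hb : b ∈ Tstar) (hab : a ≠ b) :
    NConnected (con M {a}) 3 ∨ NConnected (con M {b}) 3 := by
  rw [circuit_iff] at hT
  rw [eRk_eq] at hcork
  have hE := four_le_encard_ground hT hTcard hcork
  have : M.RankFinite := h3.rankFinite ⟨a, hT.subset_ground ha, b, hT.subset_ground hb, hab⟩
  obtain ⟨c, hac, hbc, rfl⟩ := exists_eq_triple_of_encard_eq_three hTcard ha hb hab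
  by_contra! h
  obtain ⟨X, Y, Ga, hX, hY, hbX, hcY⟩ := h3.exists_isGutsSep_of_triad hE hT hnofan hab hac hbc h.1
  obtain ⟨U, V, Gb, hU, hV, haU, hcV⟩ := h3.exists_isGutsSep_of_triad hE
    (insert_comm a b {c} ▸ hT) (insert_comm a b {c} ▸ hnofan) hab.symm hbc hac h.2
  exact (Matroid.TriadGutsSeps.mk hT Ga Gb hbX haU ⟨hcY, hcV⟩).false_of_three_le_encard h3 hE
    hnofan hX hY hU hV
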